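/- Let a ∈ ℂ, 0 < r₁ < r₂, and let z₀ be a point of the interior of A(a,r₁,r₂). Then there exist an open neighbourhood U₀ of z₀ in ℂ, an open convex cone K ⊆ ℂ with vertex at the origin containing the ray {t(a−z₀) : t > 0}, and r > 0, such that {(z + ζ, conj(z) − conj(ζ)) : z ∈ U₀, ζ ∈ K, |ζ| < r} ⊆ Ω(A(a,r₁,r₂)). -/

import Mathlib

open Complex Metric ComplexConjugate

/-- The variety `Λ_{a,ρ} = {(z,w) : (z−a)(w−conj a) = ρ², 0 < |z−a| < ρ}`. -/
def Lam (a : ℂ) (ρ : ℝ) : Set (ℂ × ℂ) :=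
  {p | (p.1 - a) * (p.2 - conj a) = (ρ : ℂ) ^ 2 ∧
        0 < ‖p.1 - a‖ ∧ ‖p.1 - a‖ < ρ}

/-- The closed annulus `A(a,r₁,r₂) = {z : r₁ ≤ |z−a| ≤ r₂}`. -/
def Ann (a : ℂ) (r₁ r₂ : ℝ) : Set ℂ :=
  {z | r₁ ≤ ‖z - a‖ ∧ ‖z - a‖ ≤ r₂}

/-- `Ω(A(a,r₁,r₂))`: the union of all `Λ_{b,ρ}` with `bΔ(b,ρ) ⊆ Int A(a,r₁,r₂)`
surrounding `a`. -/
def OmegaA (a : ℂ) (r₁ r₂ : ℝ) : Set (ℂ × ℂ) :=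
  {p | ∃ (b : ℂ) (ρ : ℝ), 0 < ρ ∧ sphere b ρ ⊆ interior (Ann a r₁ r₂) ∧
        ‖b - a‖ < ρ ∧ p ∈ Lam b ρ}

/-!
For `c > 1`, the points `z + ζ` and `z - ζ` are inverse to each other with respect to the
circle of centre `b = z + cζ` and radius `ρ = √(c² - 1) |ζ|`, which is exactly the statement
`(z + ζ, conj (z - ζ)) ∈ Λ_{b,ρ}`. Take `c = |z - a| / |ζ|`. If `ζ` is small and points nearly in
the direction `a - z₀`, and `z` is close to `z₀`, then `b` is close to `a` and `ρ` is close to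
`|z₀ - a|`, so the circle `bΔ(b,ρ)` stays inside the open annulus `r₁ < |w - a| < r₂`.
-/

section ApertureCone

variable {E : Type*} [SeminormedAddCommGroup E] [NormedSpace ℝ E] {e x : E} {η : ℝ}

-- For `‖e‖ = 1` and `0 < η < 1`, the open cone of half-angle `arcsin η` around `e`.
def apertureCone (e : E) (η : ℝ) : Set E :=
  ⋃ t > (0 : ℝ), ball (t • e) (t * η)

theorem mem_apertureCone : x ∈ apertureCone e η ↔ ∃ t > 0, ‖x - t • e‖ < t * η := by
  simp [apertureCone, dist_eq_norm]

theorem isOpen_apertureCone : IsOpen (apertureCone e η) :=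
  isOpen_biUnion fun _ _ => isOpen_ball

theorem convex_apertureCone : Convex ℝ (apertureCone e η) := by
  refine convex_iff_forall_pos.2 fun x hx y hy a b ha hb _ => ?_
  obtain ⟨s, hs, hxs⟩ := mem_apertureCone.1 hx
  obtain ⟨t, ht, hyt⟩ := mem_apertureCone.1 hy
  refine mem_apertureCone.2 ⟨a * s + b * t, by positivity, ?_⟩
  calc ‖a • x + b • y - (a * s + b * t) • e‖
      = ‖a • (x - s • e) + b • (y - t • e)‖ := by
        simp only [smul_sub, add_smul, mul_smul]; congr 1; abel
    _ ≤ a * ‖x - s • e‖ + b * ‖y - t • e‖ := by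
        refine (norm_add_le _ _).trans ?_
        simp only [norm_smul, Real.norm_of_nonneg ha.le, Real.norm_of_nonneg hb.le, le_refl]
    _ < a * (s * η) + b * (t * η) := by gcongr
    _ = (a * s + b * t) * η := by ring

theorem smul_mem_apertureCone {c : ℝ} (hc : 0 < c) (hx : x ∈ apertureCone e η) :
    c • x ∈ apertureCone e η := by
  obtain ⟨t, ht, hxt⟩ := mem_apertureCone.1 hx
  refine mem_apertureCone.2 ⟨c * t, by positivity, ?_⟩
  rw [mul_smul, ← smul_sub, norm_smul, Real.norm_of_nonneg hc.le, mul_assoc]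
  gcongr

theorem self_mem_apertureCone (hη : 0 < η) : e ∈ apertureCone e η :=
  mem_apertureCone.2 ⟨1, one_pos, by simpa using hη⟩

theorem zero_notMem_apertureCone (hη : η ≤ ‖e‖) : (0 : E) ∉ apertureCone e η := by
  rw [mem_apertureCone]
  rintro ⟨t, ht, h⟩
  rw [zero_sub, norm_neg, norm_smul, Real.norm_of_nonneg ht.le] at h
  exact (mul_le_mul_of_nonneg_left hη ht.le).not_gt h

theorem norm_sub_norm_smul_lt_of_mem_apertureCone (he : ‖e‖ = 1) (hη : η ≤ 1 / 2)
    (hx : x ∈ apertureCone e η) : ‖x - ‖x‖ • e‖ < 4 * η * ‖x‖ := by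
  obtain ⟨t, ht, hxt⟩ := mem_apertureCone.1 hx
  have hnorm : |t - ‖x‖| ≤ ‖x - t • e‖ := by
    simpa [norm_smul, he, abs_of_pos ht, abs_sub_comm, norm_sub_rev] using
      abs_norm_sub_norm_le (t • e) x
  have hη₀ : 0 < η := pos_of_mul_pos_right ((norm_nonneg _).trans_lt hxt) ht.le
  have ht_lt : t < 2 * ‖x‖ := by nlinarith [(abs_le.1 hnorm).2]
  calc ‖x - ‖x‖ • e‖ = ‖(x - t • e) + (t - ‖x‖) • e‖ := by rw [sub_smul]; congr 1; abel
    _ ≤ ‖x - t • e‖ + |t - ‖x‖| := by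
        simpa [norm_smul, he] using norm_add_le (x - t • e) ((t - ‖x‖) • e)
    _ < 2 * (t * η) := by linarith
    _ ≤ 4 * η * ‖x‖ := by nlinarith

end ApertureCone

theorem add_conj_sub_mem_Lam (z : ℂ) {ζ : ℂ} (hζ : ζ ≠ 0) {c : ℝ} (hc : 1 < c) :
    (z + ζ, conj z - conj ζ) ∈ Lam (z + c * ζ) (√(c ^ 2 - 1) * ‖ζ‖) := by
  have hsq : (√(c ^ 2 - 1)) ^ 2 = c ^ 2 - 1 := Real.sq_sqrt (by nlinarith)
  have hsqC : ((√(c ^ 2 - 1) : ℝ) : ℂ) ^ 2 = (c : ℂ) ^ 2 - 1 := by exact_mod_cast hsq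
  have hnorm : ‖z + ζ - (z + c * ζ)‖ = (c - 1) * ‖ζ‖ := by
    rw [show z + ζ - (z + c * ζ) = ((1 - c : ℝ) : ℂ) * ζ by push_cast; ring, norm_mul,
      Complex.norm_real, Real.norm_of_nonpos (by linarith), neg_sub]
  refine ⟨?_, ?_, ?_⟩
  · simp only [map_add, map_mul, conj_ofReal]
    push_cast
    linear_combination (↑c ^ 2 - 1 : ℂ) * mul_conj' ζ + (↑‖ζ‖ : ℂ) ^ 2 * hsqC.symm
  · rw [hnorm]
    exact mul_pos (by linarith) (norm_pos_iff.2 hζ)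
  · rw [hnorm]
    have hζpos := norm_pos_iff.2 hζ
    gcongr
    exact Real.lt_sqrt_of_sq_lt (by nlinarith)

theorem interior_Ann (a : ℂ) {r₁ r₂ : ℝ} (hr₁ : r₁ ≠ 0) (hr₂ : r₂ ≠ 0) :
    interior (Ann a r₁ r₂) = {z | r₁ < ‖z - a‖ ∧ ‖z - a‖ < r₂} := by
  have hAnn : Ann a r₁ r₂ = (ball a r₁)ᶜ ∩ closedBall a r₂ := by
    ext z; simp [Ann, dist_eq]
  rw [hAnn, interior_inter, interior_compl, closure_ball a hr₁, interior_closedBall a hr₂]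
  ext z; simp [dist_eq]

theorem mem_OmegaA_of_mem_Lam {a b : ℂ} {r₁ r₂ ρ : ℝ} {p : ℂ × ℂ} (hr₁ : 0 < r₁)
    (hinner : r₁ + ‖b - a‖ < ρ) (houter : ρ + ‖b - a‖ < r₂) (hp : p ∈ Lam b ρ) :
    p ∈ OmegaA a r₁ r₂ := by
  have hba := norm_nonneg (b - a)
  refine ⟨b, ρ, by linarith, fun x hx => ?_, by linarith, hp⟩
  rw [interior_Ann a hr₁.ne' (by linarith)]
  rw [mem_sphere, dist_eq] at hx
  have h₁ := norm_sub_le_norm_sub_add_norm_sub x b a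
  have h₂ := norm_sub_le_norm_sub_add_norm_sub x a b
  rw [norm_sub_rev a b] at h₂
  constructor <;> linarith

theorem mem_OmegaA_of_mem_apertureCone {a z₀ e z ζ : ℂ} {r₁ r₂ ε : ℝ} (hr₁ : 0 < r₁)
    (hε : 0 < ε) (he : ‖e‖ = 1) (hdir : a - z₀ = ‖z₀ - a‖ • e)
    (hinner : r₁ + 5 * ε ≤ ‖z₀ - a‖) (houter : ‖z₀ - a‖ + 4 * ε ≤ r₂)
    (hz : z ∈ ball z₀ ε) (hζ : ζ ∈ apertureCone e (ε / (4 * r₂))) (hζε : ‖ζ‖ < ε) :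
    (z + ζ, conj z - conj ζ) ∈ OmegaA a r₁ r₂ := by
  set d₀ := ‖z₀ - a‖
  set d := ‖z - a‖
  set m := ‖ζ‖
  have hr₂ : 0 < r₂ := by linarith
  have hη : ε / (4 * r₂) ≤ 1 / 2 := by rw [div_le_iff₀ (by positivity)]; linarith
  have hzz₀ : ‖z - z₀‖ < ε := by rwa [mem_ball, dist_eq] at hz
  have hdd₀ : |d - d₀| < ε := by
    refine (abs_norm_sub_norm_le _ _).trans_lt ?_
    rwa [sub_sub_sub_cancel_right]
  obtain ⟨hd_lower, hd_upper⟩ := abs_lt.1 hdd₀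
  have hζ₀ : ζ ≠ 0 := by
    rintro rfl
    exact zero_notMem_apertureCone (by rw [he]; linarith) hζ
  have hm : 0 < m := norm_pos_iff.2 hζ₀
  have hc : 1 < d / m := (one_lt_div hm).2 (by linarith)
  have hcm : d / m * m = d := div_mul_cancel₀ d hm.ne'
  set ρ := √((d / m) ^ 2 - 1) * m
  have hρ_lower : d - m ≤ ρ := by
    have : d / m - 1 ≤ √((d / m) ^ 2 - 1) := Real.le_sqrt_of_sq_le (by nlinarith)
    nlinarith
  have hρ_upper : ρ ≤ d := by
    have : √((d / m) ^ 2 - 1) ≤ d / m := Real.sqrt_le_iff.2 ⟨by positivity, by linarith⟩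
    nlinarith
  have hcenter : ‖z + ↑(d / m) * ζ - a‖ < 3 * ε := by
    have hsplit : z + ↑(d / m) * ζ - a = (z - z₀) + (d - d₀) • e + (d / m) • (ζ - m • e) := by
      rw [← real_smul, smul_sub, smul_smul, hcm, sub_smul, ← hdir]
      abel
    have hcone := norm_sub_norm_smul_lt_of_mem_apertureCone he hη hζ
    calc ‖z + ↑(d / m) * ζ - a‖
        ≤ ‖z - z₀‖ + |d - d₀| + d / m * ‖ζ - m • e‖ := by
          rw [hsplit]
          refine (norm_add_le _ _).trans (add_le_add ((norm_add_le _ _).trans ?_) ?_)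
          · rw [norm_smul, he, mul_one, Real.norm_eq_abs]
          · rw [norm_smul, Real.norm_of_nonneg (by positivity)]
      _ < ε + ε + d / m * (4 * (ε / (4 * r₂)) * m) := by gcongr
      _ = 2 * ε + ε * (d / r₂) := by field_simp; ring
      _ ≤ 3 * ε := by
          have : d / r₂ ≤ 1 := (div_le_one hr₂).2 (by linarith)
          nlinarith
  exact mem_OmegaA_of_mem_Lam hr₁ (by linarith) (by linarith) (add_conj_sub_mem_Lam z hζ₀ hc)

theorem stmt7 (a : ℂ) (r₁ r₂ : ℝ) (h1 : 0 < r₁) (h12 : r₁ < r₂)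
    (z₀ : ℂ) (hz₀ : z₀ ∈ interior (Ann a r₁ r₂)) :
    ∃ (U₀ : Set ℂ) (K : Set ℂ) (r : ℝ),
      IsOpen U₀ ∧ z₀ ∈ U₀ ∧
      IsOpen K ∧ Convex ℝ K ∧ K.Nonempty ∧ (0 : ℂ) ∉ K ∧
      (∀ ζ ∈ K, ∀ t : ℝ, 0 < t → (t : ℂ) * ζ ∈ K) ∧
      (∀ t : ℝ, 0 < t → (t : ℂ) * (a - z₀) ∈ K) ∧
      0 < r ∧
      (∀ z ∈ U₀, ∀ ζ ∈ K, ‖ζ‖ < r →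
        (z + ζ, conj z - conj ζ) ∈ OmegaA a r₁ r₂) := by
  rw [interior_Ann a h1.ne' (by linarith)] at hz₀
  obtain ⟨hd₁, hd₂⟩ := hz₀
  set d₀ := ‖z₀ - a‖
  set ε := min (d₀ - r₁) (r₂ - d₀) / 5 with hε_def
  have hε : 0 < ε := by positivity
  have hinner : r₁ + 5 * ε ≤ d₀ := by linarith [min_le_left (d₀ - r₁) (r₂ - d₀)]
  have houter : d₀ + 4 * ε ≤ r₂ := by linarith [min_le_right (d₀ - r₁) (r₂ - d₀)]
  set e : ℂ := d₀⁻¹ • (a - z₀)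
  have he : ‖e‖ = 1 := by
    rw [norm_smul, norm_inv, norm_norm, norm_sub_rev a z₀, inv_mul_cancel₀ (by linarith)]
  have hdir : a - z₀ = d₀ • e := (smul_inv_smul₀ (by linarith) _).symm
  have hη : 0 < ε / (4 * r₂) := div_pos hε (by linarith)
  refine ⟨ball z₀ ε, apertureCone e (ε / (4 * r₂)), ε, isOpen_ball, mem_ball_self hε,
    isOpen_apertureCone, convex_apertureCone, ⟨e, self_mem_apertureCone hη⟩,
    zero_notMem_apertureCone (he ▸ (div_le_one₀ (by linarith)).2 (by linarith)), fun ζ hζ t ht => ?_, fun t ht => ?_, hε,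
    fun z hz ζ hζ hζε => mem_OmegaA_of_mem_apertureCone h1 hε he hdir hinner houter hz hζ hζε⟩
  · rw [← real_smul]
    exact smul_mem_apertureCone ht hζ
  · rw [← real_smul, hdir, smul_smul]
    exact smul_mem_apertureCone (mul_pos ht (by linarith)) (self_mem_apertureCone hη)
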